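/- The class of graphs representable by closed and open unit intervals is strictly contained in the class of graphs representable by closed, open, and closed-open unit intervals, which is in turn strictly contained in the class of graphs representable by all four types of unit intervals (mixed unit interval graphs). -/

import Mathlib

/-!
A unit interval is determined by its left endpoint and by which of its two ends are closed, and
two unit intervals meet iff their left endpoints differ by less than one, or by exactly one with
both touching ends closed. Consequently, in a claw (a vertex with three pairwise non-adjacent
neighbours) the centre is closed and the leaves sit at offsets `-1`, `0`, `+1` from it, the middle
leaf open and the outer ones closed towards the centre. In the 9-vertex graph `graph9`, three
chained claws fix the intervals up to the mirror symmetry `t ↦ -t` and force vertex 7 to be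
half-open. The 14-vertex graph `graph14` extends it by two more claws that force vertex 10 to be
half-open with the orientation opposite to that of vertex 7, so one of the two is open-closed.
-/

open Set

def IsUnitCC (I : Set ℝ) : Prop := ∃ x : ℝ, I = Set.Icc x (x + 1)
def IsUnitOO (I : Set ℝ) : Prop := ∃ x : ℝ, I = Set.Ioo x (x + 1)
def IsUnitCO (I : Set ℝ) : Prop := ∃ x : ℝ, I = Set.Ico x (x + 1)
def IsUnitOC (I : Set ℝ) : Prop := ∃ x : ℝ, I = Set.Ioc x (x + 1)
def IsUnitInterval (I : Set ℝ) : Prop := IsUnitCC I ∨ IsUnitOO I ∨ IsUnitCO I ∨ IsUnitOC I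

def IsRep {V : Type*} (G : SimpleGraph V) (f : V → Set ℝ) : Prop :=
  ∀ u v : V, u ≠ v → (G.Adj u v ↔ (f u ∩ f v).Nonempty)

def MixedUIG {V : Type*} (G : SimpleGraph V) : Prop :=
  ∃ f : V → Set ℝ, IsRep G f ∧ ∀ v, IsUnitInterval (f v)

def AlmostMixedUIG {V : Type*} (G : SimpleGraph V) : Prop :=
  ∃ f : V → Set ℝ, IsRep G f ∧ ∀ v, IsUnitCC (f v) ∨ IsUnitOO (f v) ∨ IsUnitCO (f v)

def TwinFree {V : Type*} (G : SimpleGraph V) : Prop :=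
  ∀ u v : V, insert u (G.neighborSet u) = insert v (G.neighborSet v) → u = v

structure UnitIv where
  left : ℝ
  closedLeft : Bool
  closedRight : Bool

namespace UnitIv

variable {I J a u v w : UnitIv}

def toSet (I : UnitIv) : Set ℝ :=
  {t | (I.left < t ∨ I.closedLeft ∧ t = I.left) ∧
    (t < I.left + 1 ∨ I.closedRight ∧ t = I.left + 1)}

def Meets (I J : UnitIv) : Prop :=
  (I.left < J.left + 1 ∨ I.left = J.left + 1 ∧ I.closedLeft ∧ J.closedRight) ∧
  (J.left < I.left + 1 ∨ J.left = I.left + 1 ∧ J.closedLeft ∧ I.closedRight)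

/-- The mirror image under `t ↦ -t`. -/
def reflect (I : UnitIv) : UnitIv := ⟨-I.left - 1, I.closedRight, I.closedLeft⟩

@[simp] theorem toSet_closed_closed (x : ℝ) : toSet ⟨x, true, true⟩ = Icc x (x + 1) := by
  ext t; simp [toSet, le_iff_lt_or_eq, eq_comm]

@[simp] theorem toSet_open_open (x : ℝ) : toSet ⟨x, false, false⟩ = Ioo x (x + 1) := by
  ext t; simp [toSet]

@[simp] theorem toSet_closed_open (x : ℝ) : toSet ⟨x, true, false⟩ = Ico x (x + 1) := by
  ext t; simp [toSet, le_iff_lt_or_eq, eq_comm]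

@[simp] theorem toSet_open_closed (x : ℝ) : toSet ⟨x, false, true⟩ = Ioc x (x + 1) := by
  ext t; simp [toSet, le_iff_lt_or_eq, eq_comm]

theorem isUnitInterval_toSet (I : UnitIv) : IsUnitInterval I.toSet := by
  obtain ⟨x, _ | _, _ | _⟩ := I
  · exact Or.inr (Or.inl ⟨x, toSet_open_open x⟩)
  · exact Or.inr (Or.inr (Or.inr ⟨x, toSet_open_closed x⟩))
  · exact Or.inr (Or.inr (Or.inl ⟨x, toSet_closed_open x⟩))
  · exact Or.inl ⟨x, toSet_closed_closed x⟩

theorem exists_toSet_eq_of_isUnitCC_or_isUnitOO {S : Set ℝ} (h : IsUnitCC S ∨ IsUnitOO S) :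
    ∃ I : UnitIv, I.toSet = S ∧ I.closedLeft = I.closedRight := by
  rcases h with ⟨x, rfl⟩ | ⟨x, rfl⟩
  exacts [⟨⟨x, true, true⟩, by simp, rfl⟩, ⟨⟨x, false, false⟩, by simp, rfl⟩]

theorem exists_toSet_eq_iff_isUnitCC_or_isUnitOO_or_isUnitCO {S : Set ℝ} :
    (∃ I : UnitIv, I.toSet = S ∧ (I.closedRight → I.closedLeft)) ↔
      IsUnitCC S ∨ IsUnitOO S ∨ IsUnitCO S := by
  constructor
  · rintro ⟨⟨x, _ | _, _ | _⟩, rfl, h⟩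
    · exact Or.inr (Or.inl ⟨x, toSet_open_open x⟩)
    · simp at h
    · exact Or.inr (Or.inr ⟨x, toSet_closed_open x⟩)
    · exact Or.inl ⟨x, toSet_closed_closed x⟩
  · rintro (⟨x, rfl⟩ | ⟨x, rfl⟩ | ⟨x, rfl⟩)
    exacts [⟨⟨x, true, true⟩, by simp, by simp⟩, ⟨⟨x, false, false⟩, by simp, by simp⟩,
      ⟨⟨x, true, false⟩, by simp, by simp⟩]

theorem toSet_inter_nonempty_iff : (I.toSet ∩ J.toSet).Nonempty ↔ I.Meets J := by
  constructor
  · rintro ⟨t, ⟨hI₁, hI₂⟩, hJ₁, hJ₂⟩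
    constructor
    · rcases hI₁ with h | ⟨hc, rfl⟩ <;> rcases hJ₂ with h' | ⟨hc', h'⟩
      exacts [Or.inl (by linarith), Or.inl (by linarith), Or.inl (by linarith),
        Or.inr ⟨h', hc, hc'⟩]
    · rcases hJ₁ with h | ⟨hc, rfl⟩ <;> rcases hI₂ with h' | ⟨hc', h'⟩
      exacts [Or.inl (by linarith), Or.inl (by linarith), Or.inl (by linarith),
        Or.inr ⟨h', hc, hc'⟩]
  · rintro ⟨h | ⟨he, hl, hr⟩, h' | ⟨he', hl', hr'⟩⟩
    · exact ⟨(I.left + J.left + 1) / 2, ⟨Or.inl (by linarith), Or.inl (by linarith)⟩,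
        Or.inl (by linarith), Or.inl (by linarith)⟩
    · exact ⟨J.left, ⟨Or.inl (by linarith), Or.inr ⟨hr', he'⟩⟩, Or.inr ⟨hl', rfl⟩,
        Or.inl (by linarith)⟩
    · exact ⟨I.left, ⟨Or.inr ⟨hl, rfl⟩, Or.inl (by linarith)⟩, Or.inl (by linarith),
        Or.inr ⟨hr, he⟩⟩
    · linarith

theorem Meets.symm (h : I.Meets J) : J.Meets I := ⟨h.2, h.1⟩

theorem reflect_meets_reflect : I.reflect.Meets J.reflect ↔ I.Meets J := by
  simp only [Meets, reflect]
  constructor <;> rintro ⟨h | ⟨he, hl, hr⟩, h' | ⟨he', hl', hr'⟩⟩ <;>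
    first
    | exact ⟨Or.inl (by linarith), Or.inl (by linarith)⟩
    | exact ⟨Or.inr ⟨by linarith, hr', hl'⟩, Or.inl (by linarith)⟩
    | exact ⟨Or.inl (by linarith), Or.inr ⟨by linarith, hr, hl⟩⟩

theorem Meets.left_le (h : I.Meets J) : I.left ≤ J.left + 1 := by
  rcases h.1 with h | ⟨h, -⟩ <;> linarith

theorem Meets.closed_of_touching (h : I.Meets J) (he : I.left = J.left + 1) :
    I.closedLeft ∧ J.closedRight := by
  rcases h.1 with h | ⟨-, hl, hr⟩
  exacts [absurd he h.ne, ⟨hl, hr⟩]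

theorem meets_of_touching (he : I.left = J.left + 1) (hl : I.closedLeft) (hr : J.closedRight) :
    I.Meets J :=
  ⟨Or.inr ⟨he, hl, hr⟩, Or.inl (by linarith)⟩

theorem meets_of_left_eq (he : I.left = J.left) : I.Meets J :=
  ⟨Or.inl (by linarith), Or.inl (by linarith)⟩

theorem left_ne_of_not_meets (h : ¬I.Meets J) : I.left ≠ J.left :=
  fun he => h (meets_of_left_eq he)

theorem add_one_le_of_not_meets (h : ¬I.Meets J) (hle : I.left ≤ J.left) :
    I.left + 1 ≤ J.left := by
  by_contra! hlt
  exact h ⟨Or.inl (by linarith), Or.inl hlt⟩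

structure IsClaw (a u v w : UnitIv) : Prop where
  meets_u : a.Meets u
  meets_v : a.Meets v
  meets_w : a.Meets w
  not_meets_uv : ¬u.Meets v
  not_meets_uw : ¬u.Meets w
  not_meets_vw : ¬v.Meets w

def IsClawLeaf (a u : UnitIv) : Prop :=
  u.left = a.left - 1 ∧ u.closedRight ∨
  u.left = a.left ∧ ¬u.closedLeft ∧ ¬u.closedRight ∨
  u.left = a.left + 1 ∧ u.closedLeft

namespace IsClaw

theorem swap_uv (h : IsClaw a u v w) : IsClaw a v u w :=
  ⟨h.meets_v, h.meets_u, h.meets_w, fun h' => h.not_meets_uv h'.symm, h.not_meets_vw,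
    h.not_meets_uw⟩

theorem swap_vw (h : IsClaw a u v w) : IsClaw a u w v :=
  ⟨h.meets_u, h.meets_w, h.meets_v, h.not_meets_uw, h.not_meets_uv,
    fun h' => h.not_meets_vw h'.symm⟩

theorem shape_of_lt (h : IsClaw a u v w) (huv : u.left < v.left) (hvw : v.left < w.left) :
    a.closedLeft ∧ a.closedRight ∧ IsClawLeaf a u ∧ IsClawLeaf a v ∧ IsClawLeaf a w := by
  have huv' := add_one_le_of_not_meets h.not_meets_uv huv.le
  have hvw' := add_one_le_of_not_meets h.not_meets_vw hvw.le
  have hu := h.meets_u.left_le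
  have hw := h.meets_w.symm.left_le
  have hau : a.left = u.left + 1 := by linarith
  have hwa : w.left = a.left + 1 := by linarith
  obtain ⟨hal, hur⟩ := h.meets_u.closed_of_touching hau
  obtain ⟨hwl, har⟩ := h.meets_w.symm.closed_of_touching hwa
  have hvl : ¬v.closedLeft := fun hl =>
    h.not_meets_uv (meets_of_touching (by linarith) hl hur).symm
  have hvr : ¬v.closedRight := fun hr =>
    h.not_meets_vw (meets_of_touching (by linarith) hwl hr).symm
  exact ⟨hal, har, Or.inl ⟨by linarith, hur⟩, Or.inr (Or.inl ⟨by linarith, hvl, hvr⟩),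
    Or.inr (Or.inr ⟨hwa, hwl⟩)⟩

theorem shape (h : IsClaw a u v w) :
    a.closedLeft ∧ a.closedRight ∧ IsClawLeaf a u ∧ IsClawLeaf a v ∧ IsClawLeaf a w := by
  rcases (left_ne_of_not_meets h.not_meets_uv).lt_or_gt with huv | huv <;>
    rcases (left_ne_of_not_meets h.not_meets_uw).lt_or_gt with huw | huw <;>
    rcases (left_ne_of_not_meets h.not_meets_vw).lt_or_gt with hvw | hvw
  · exact h.shape_of_lt huv hvw
  · obtain ⟨hl, hr, hu, hw, hv⟩ := h.swap_vw.shape_of_lt huw hvw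
    exact ⟨hl, hr, hu, hv, hw⟩
  · linarith
  · obtain ⟨hl, hr, hw, hu, hv⟩ := h.swap_vw.swap_uv.shape_of_lt huw huv
    exact ⟨hl, hr, hu, hv, hw⟩
  · obtain ⟨hl, hr, hv, hu, hw⟩ := h.swap_uv.shape_of_lt huv huw
    exact ⟨hl, hr, hu, hv, hw⟩
  · linarith
  · obtain ⟨hl, hr, hv, hw, hu⟩ := h.swap_uv.swap_vw.shape_of_lt hvw huw
    exact ⟨hl, hr, hu, hv, hw⟩
  · obtain ⟨hl, hr, hw, hv, hu⟩ := h.swap_uv.swap_vw.swap_uv.shape_of_lt hvw huv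
    exact ⟨hl, hr, hu, hv, hw⟩

end IsClaw

end UnitIv

open UnitIv

section Representation

variable {V W : Type*} {G : SimpleGraph V} {p : V → UnitIv}

theorem IsRep.comap {f : V → Set ℝ} (hf : IsRep G f) {e : W → V} (he : e.Injective) :
    IsRep (G.comap e) (f ∘ e) :=
  fun u v huv => hf (e u) (e v) (he.ne huv)

theorem isRep_toSet_iff :
    IsRep G (toSet ∘ p) ↔ ∀ u v, u ≠ v → (G.Adj u v ↔ (p u).Meets (p v)) := by
  simp only [IsRep, Function.comp_apply, toSet_inter_nonempty_iff]

theorem IsRep.meets (hp : IsRep G (toSet ∘ p)) {u v : V} (huv : G.Adj u v) :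
    (p u).Meets (p v) :=
  (isRep_toSet_iff.1 hp u v huv.ne).1 huv

theorem IsRep.not_meets (hp : IsRep G (toSet ∘ p)) {u v : V} (hne : u ≠ v) (huv : ¬G.Adj u v) :
    ¬(p u).Meets (p v) :=
  mt (isRep_toSet_iff.1 hp u v hne).2 huv

theorem IsRep.reflect (hp : IsRep G (toSet ∘ p)) : IsRep G (toSet ∘ UnitIv.reflect ∘ p) :=
  isRep_toSet_iff.2 fun u v huv => by
    simpa only [Function.comp_apply, reflect_meets_reflect] using isRep_toSet_iff.1 hp u v huv

theorem IsRep.isClaw (hp : IsRep G (toSet ∘ p)) {a u v w : V}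
    (h : G.Adj a u ∧ G.Adj a v ∧ G.Adj a w ∧ u ≠ v ∧ u ≠ w ∧ v ≠ w ∧
      ¬G.Adj u v ∧ ¬G.Adj u w ∧ ¬G.Adj v w) :
    IsClaw (p a) (p u) (p v) (p w) :=
  let ⟨hu, hv, hw, huv, huw, hvw, nuv, nuw, nvw⟩ := h
  ⟨hp.meets hu, hp.meets hv, hp.meets hw, hp.not_meets huv nuv, hp.not_meets huw nuw,
    hp.not_meets hvw nvw⟩

end Representation

def graph14Edges : List (Fin 14 × Fin 14) :=
  [(0, 1), (1, 2), (1, 3), (3, 4), (3, 5), (3, 7), (5, 6), (5, 7), (5, 8), (6, 7),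
   (8, 9), (8, 10), (8, 11), (9, 10), (10, 11), (11, 12), (11, 13)]

def graph14 : SimpleGraph (Fin 14) := SimpleGraph.fromRel fun u v => (u, v) ∈ graph14Edges

instance : DecidableRel graph14.Adj :=
  inferInstanceAs (DecidableRel (SimpleGraph.fromRel _).Adj)

def graph9 : SimpleGraph (Fin 9) := graph14.comap (Fin.castLE (by norm_num))

instance : DecidableRel graph9.Adj :=
  inferInstanceAs (DecidableRel (graph14.comap _).Adj)

def intervals14 : Fin 14 → UnitIv :=
  ![⟨-1, true, true⟩, ⟨0, true, true⟩, ⟨0, false, false⟩, ⟨1, true, true⟩, ⟨1, false, false⟩,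
    ⟨2, true, true⟩, ⟨2, false, false⟩, ⟨2, true, false⟩, ⟨3, true, true⟩, ⟨3, false, false⟩,
    ⟨3, false, true⟩, ⟨4, true, true⟩, ⟨4, false, false⟩, ⟨5, true, true⟩]

theorem isRep_intervals14 : IsRep graph14 (toSet ∘ intervals14) := by
  refine isRep_toSet_iff.2 fun u v huv => ?_
  fin_cases u <;> fin_cases v <;>
    first
    | exact absurd rfl huv
    | exact iff_of_true (by decide) (by norm_num [intervals14, Meets])
    | exact iff_of_false (by decide) (by norm_num [intervals14, Meets])

theorem graph9_rigid_of_left_le {p : Fin 9 → UnitIv} (hp : IsRep graph9 (toSet ∘ p))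
    (h13 : (p 1).left ≤ (p 3).left) :
    (p 7).closedLeft ∧ ¬(p 7).closedRight ∧ (p 8).left = (p 5).left + 1 ∧ (p 5).closedRight := by
  have hA : IsClaw (p 1) (p 0) (p 2) (p 3) := hp.isClaw (by decide)
  have hB : IsClaw (p 3) (p 1) (p 4) (p 7) := hp.isClaw (by decide)
  have hC : IsClaw (p 5) (p 3) (p 6) (p 8) := hp.isClaw (by decide)
  have n15 := hp.not_meets (u := 1) (v := 5) (by decide) (by decide)
  have n45 := hp.not_meets (u := 4) (v := 5) (by decide) (by decide)
  have n78 := hp.not_meets (u := 7) (v := 8) (by decide) (by decide)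
  obtain ⟨-, -, -, -, hA3⟩ := hA.shape
  obtain ⟨hl3, -, -, hB4, hB7⟩ := hB.shape
  obtain ⟨-, hr5, hC3, -, hC8⟩ := hC.shape
  have hx3 : (p 3).left = (p 1).left + 1 := by
    rcases hA3 with ⟨e, -⟩ | ⟨-, hl, -⟩ | ⟨e, -⟩
    exacts [by linarith, absurd hl3 hl, e]
  have hx5 : (p 5).left = (p 3).left + 1 := by
    rcases hC3 with ⟨e, -⟩ | ⟨-, hl, -⟩ | ⟨e, -⟩
    exacts [by linarith, absurd hl3 hl, absurd (meets_of_left_eq (by linarith)) n15]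
  have hx7 : (p 7).left = (p 3).left + 1 ∧ (p 7).closedLeft := by
    rcases hB7 with ⟨e, -⟩ | ⟨e, -⟩ | h
    · exact absurd (meets_of_left_eq (by linarith)) hB.not_meets_uw
    · rcases hB4 with ⟨e', -⟩ | ⟨e', -⟩ | ⟨e', -⟩
      · exact absurd (meets_of_left_eq (by linarith)) hB.not_meets_uv
      · exact absurd (meets_of_left_eq (by linarith)) hB.not_meets_vw
      · exact absurd (meets_of_left_eq (by linarith)) n45
    · exact h
  have hx8 : (p 8).left = (p 5).left + 1 ∧ (p 8).closedLeft := by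
    rcases hC8 with ⟨e, -⟩ | ⟨e, -⟩ | h
    · exact absurd (meets_of_left_eq (by linarith)) hC.not_meets_uw
    · exact absurd (meets_of_left_eq (by linarith [hx7.1])) n78
    · exact h
  refine ⟨hx7.2, fun hr7 => n78 (meets_of_touching ?_ hx8.2 hr7).symm, hx8.1, hr5⟩
  linarith [hx7.1, hx8.1]

theorem graph14_rigid_of_left_le {p : Fin 14 → UnitIv} (hp : IsRep graph14 (toSet ∘ p))
    (h13 : (p 1).left ≤ (p 3).left) :
    (p 7).closedLeft ∧ ¬(p 7).closedRight ∧ ¬(p 10).closedLeft ∧ (p 10).closedRight := by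
  obtain ⟨hl7, hr7, hx8, hr5⟩ : (p 7).closedLeft ∧ ¬(p 7).closedRight ∧
      (p 8).left = (p 5).left + 1 ∧ (p 5).closedRight :=
    graph9_rigid_of_left_le (hp.comap (Fin.castLE_injective _)) h13
  have hD : IsClaw (p 8) (p 5) (p 9) (p 11) := hp.isClaw (by decide)
  have hE : IsClaw (p 11) (p 10) (p 12) (p 13) := hp.isClaw (by decide)
  have m8_10 := hp.meets (u := 8) (v := 10) (by decide)
  have n5_10 := hp.not_meets (u := 5) (v := 10) (by decide) (by decide)
  obtain ⟨-, -, -, -, hD11⟩ := hD.shape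
  obtain ⟨hl11, -, hE10, -⟩ := hE.shape
  have hx11 : (p 11).left = (p 8).left + 1 := by
    rcases hD11 with ⟨e, -⟩ | ⟨-, hl, -⟩ | ⟨e, -⟩
    exacts [absurd (meets_of_left_eq (by linarith)) hD.not_meets_uw, absurd hl11 hl, e]
  have hx10 : (p 10).left = (p 8).left ∧ (p 10).closedRight := by
    rcases hE10 with ⟨e, h⟩ | ⟨e, hl, -⟩ | ⟨e, -⟩
    · exact ⟨by linarith, h⟩
    · exact absurd (m8_10.symm.closed_of_touching (by linarith)).1 hl
    · linarith [m8_10.symm.left_le]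
  refine ⟨hl7, hr7, fun hl10 => n5_10 (meets_of_touching ?_ hl10 hr5).symm, hx10.2⟩
  linarith [hx10.1]

theorem graph9_closedLeft_ne_closedRight {p : Fin 9 → UnitIv} (hp : IsRep graph9 (toSet ∘ p)) :
    (p 7).closedLeft ≠ (p 7).closedRight := by
  rcases le_total (p 1).left (p 3).left with h | h
  · obtain ⟨hl, hr, -⟩ := graph9_rigid_of_left_le hp h
    simp_all
  · obtain ⟨hl, hr, -⟩ :=
      graph9_rigid_of_left_le hp.reflect (by dsimp [reflect]; linarith)
    simp_all [reflect]

theorem graph14_exists_open_closed {p : Fin 14 → UnitIv} (hp : IsRep graph14 (toSet ∘ p)) :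
    ∃ v, ¬(p v).closedLeft ∧ (p v).closedRight := by
  rcases le_total (p 1).left (p 3).left with h | h
  · exact ⟨10, (graph14_rigid_of_left_le hp h).2.2⟩
  · obtain ⟨hl, hr, -⟩ :=
      graph14_rigid_of_left_le hp.reflect (by dsimp [reflect]; linarith)
    exact ⟨7, hr, hl⟩

theorem mixedUIG_graph14 : MixedUIG graph14 :=
  ⟨toSet ∘ intervals14, isRep_intervals14, fun _ => isUnitInterval_toSet _⟩

theorem not_almostMixedUIG_graph14 : ¬AlmostMixedUIG graph14 := by
  rintro ⟨f, hf, htype⟩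
  choose p hpf hp using fun v => exists_toSet_eq_iff_isUnitCC_or_isUnitOO_or_isUnitCO.2 (htype v)
  obtain rfl : f = toSet ∘ p := funext fun v => (hpf v).symm
  obtain ⟨v, hl, hr⟩ := graph14_exists_open_closed hf
  exact hl (hp v hr)

theorem almostMixedUIG_graph9 : AlmostMixedUIG graph9 :=
  ⟨toSet ∘ intervals14 ∘ Fin.castLE (by norm_num),
    isRep_intervals14.comap (Fin.castLE_injective _),
    fun v => exists_toSet_eq_iff_isUnitCC_or_isUnitOO_or_isUnitCO.1
      ⟨_, rfl, by fin_cases v <;> decide⟩⟩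

theorem not_closed_open_rep_graph9 :
    ¬∃ f : Fin 9 → Set ℝ, IsRep graph9 f ∧ ∀ v, IsUnitCC (f v) ∨ IsUnitOO (f v) := by
  rintro ⟨f, hf, htype⟩
  choose p hpf hp using fun v => exists_toSet_eq_of_isUnitCC_or_isUnitOO (htype v)
  obtain rfl : f = toSet ∘ p := funext fun v => (hpf v).symm
  exact graph9_closedLeft_ne_closedRight hf (hp 7)

theorem stmt10 :
    (∀ (n : ℕ) (G : SimpleGraph (Fin n)),
      (∃ f : Fin n → Set ℝ, IsRep G f ∧ ∀ v, IsUnitCC (f v) ∨ IsUnitOO (f v)) →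
      AlmostMixedUIG G) ∧
    (∃ (n : ℕ) (G : SimpleGraph (Fin n)), AlmostMixedUIG G ∧
      ¬ ∃ f : Fin n → Set ℝ, IsRep G f ∧ ∀ v, IsUnitCC (f v) ∨ IsUnitOO (f v)) ∧
    (∀ (n : ℕ) (G : SimpleGraph (Fin n)), AlmostMixedUIG G → MixedUIG G) ∧
    (∃ (n : ℕ) (G : SimpleGraph (Fin n)), MixedUIG G ∧ ¬ AlmostMixedUIG G) :=
  ⟨fun _ _ ⟨f, hf, h⟩ => ⟨f, hf, fun v => (h v).imp_right Or.inl⟩,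
    ⟨9, graph9, almostMixedUIG_graph9, not_closed_open_rep_graph9⟩,
    fun _ _ ⟨f, hf, h⟩ => ⟨f, hf, fun v => (h v).imp_right (Or.imp_right Or.inl)⟩,
    ⟨14, graph14, mixedUIG_graph14, not_almostMixedUIG_graph14⟩⟩
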